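/- For every μ > π√3/2, the infimum of the energy E(u) = (1/2)∫_ℝ |u′|² − (1/6)∫_ℝ |u|⁶ over all u ∈ H¹(ℝ) satisfying ‖u‖_{L²(ℝ)}² = μ and u(x) = 0 for all x ∉ [0,1] equals −∞. (In particular there exists such a compactly supported u with E(u) < 0, and the mass-preserving rescaling v_λ(x) = √λ·v(λx), which shrinks the support and satisfies E(v_λ) = λ²E(v), drives the energy to −∞.) -/

import Mathlib

open MeasureTheory Real Set

noncomputable section

/-- `u ∈ H¹(ℝ)` with weak derivative `u'`. -/
def IsH1Line (u u' : ℝ → ℝ) : Prop :=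
  (∀ x : ℝ, u x = u 0 + ∫ t in (0:ℝ)..x, u' t) ∧
  MemLp u 2 volume ∧ MemLp u' 2 volume

/-- The `L²`-critical NLS energy on the line. -/
def energyLine (u u' : ℝ → ℝ) : ℝ :=
  (1 / 2) * (∫ x : ℝ, u' x ^ 2) - (1 / 6) * (∫ x : ℝ, u x ^ 6)

/-!
The function `x ↦ c φ(l x - d)` has mass `c² m / l` and energy `c² l k / 2 - c⁶ p / (6 l)`,
where `m = ‖φ‖₂²`, `k = ‖φ'‖₂²`, `p = ‖φ‖₆⁶`. Fixing the mass to `μ`, the energy becomes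
`l² (μ k / (2 m) - μ³ p / (6 m³))`: it tends to `-∞` as `l → ∞` (while the support shrinks
into `[0, 1]`) as soon as `3 k m² < μ² p`.

Such a compactly supported `φ` exists for every `μ > μ_ℝ`: `√sech` attains equality in the sharp
Gagliardo–Nirenberg inequality `‖u‖₆⁶ ≤ 3 ‖u‖₂⁴ ‖u'‖₂² / μ_ℝ²`, with `m = π`, `k = π / 8`,
`p = π / 2`. Cutting it off at `|x| = R` with linear ramps of width one changes these integrals
by `O(sech R)`, so the truncation works for `R` large.
-/

open Filter Topology

section Rescaling

variable {E : Type*} [NormedAddCommGroup E]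

theorem MeasureTheory.MemLp.comp_mul_sub {f : ℝ → E} {p : ENNReal} (hf : MemLp f p) {l : ℝ}
    (hl : l ≠ 0) (d : ℝ) : MemLp (fun x => f (l * x - d)) p := by
  have hshift : MemLp (fun y => f (y - d)) p :=
    hf.comp_measurePreserving (measurePreserving_sub_right volume d)
  have hmap : MemLp (fun y => f (y - d)) p (Measure.map (l * ·) volume) := by
    rw [Real.map_volume_mul_left hl]
    exact hshift.smul_measure ENNReal.ofReal_ne_top
  exact (memLp_map_measure_iff hmap.1 (measurable_const_mul l).aemeasurable).1 hmap

theorem MeasureTheory.MemLp.intervalIntegrable {f : ℝ → E} {p : ENNReal} (hf : MemLp f p)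
    (hp : 1 ≤ p) (a b : ℝ) : IntervalIntegrable f volume a b :=
  ((hf.locallyIntegrable hp).integrableOn_isCompact isCompact_uIcc).intervalIntegrable

theorem integral_comp_mul_sub [NormedSpace ℝ E] (G : ℝ → E) {l : ℝ} (hl : 0 < l) (d : ℝ) :
    ∫ x, G (l * x - d) = l⁻¹ • ∫ y, G y := by
  rw [Measure.integral_comp_mul_left (fun y => G (y - d)) l, integral_sub_right_eq_self G d,
    abs_of_pos (inv_pos.2 hl)]

end Rescaling

theorem integral_const_mul_comp_mul_sub_pow (g : ℝ → ℝ) (a : ℝ) {l : ℝ} (hl : 0 < l)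
    (d : ℝ) (n : ℕ) : ∫ x, (a * g (l * x - d)) ^ n = a ^ n * l⁻¹ * ∫ x, g x ^ n := by
  simp_rw [mul_pow]
  rw [integral_const_mul, integral_comp_mul_sub (fun y => g y ^ n) hl d, smul_eq_mul, mul_assoc]

theorem IsH1Line.rescale {φ φ' : ℝ → ℝ} (h : IsH1Line φ φ') (c : ℝ) {l : ℝ}
    (hl : l ≠ 0) (d : ℝ) :
    IsH1Line (fun x => c * φ (l * x - d)) (fun x => c * l * φ' (l * x - d)) := by
  obtain ⟨hftc, hφ, hφ'⟩ := h
  refine ⟨fun x => ?_, (hφ.comp_mul_sub hl d).const_mul c,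
    (hφ'.comp_mul_sub hl d).const_mul (c * l)⟩
  have hint := hφ'.intervalIntegrable one_le_two
  have hdiff : ∫ t in (-d)..(l * x - d), φ' t = φ (l * x - d) - φ (-d) := by
    rw [← intervalIntegral.integral_interval_sub_left (hint 0 _) (hint 0 _), hftc (l * x - d),
      hftc (-d)]
    ring
  rw [intervalIntegral.integral_const_mul, intervalIntegral.integral_comp_mul_sub (f := φ') hl d]
  simp only [mul_zero, zero_sub, hdiff, smul_eq_mul]
  field_simp
  ring

theorem exists_supported_energyLine_lt {φ φ' : ℝ → ℝ} {d μ : ℝ} (hφ : IsH1Line φ φ')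
    (hsupp : ∀ x ∉ Icc (-d) d, φ x = 0) (hm : 0 < ∫ x, φ x ^ 2) (hμ : 0 ≤ μ)
    (hratio : 3 * (∫ x, φ' x ^ 2) * (∫ x, φ x ^ 2) ^ 2 < μ ^ 2 * ∫ x, φ x ^ 6) (M : ℝ) :
    ∃ u u' : ℝ → ℝ, IsH1Line u u' ∧ (∫ x, u x ^ 2) = μ ∧
      (∀ x ∉ Icc (0:ℝ) 1, u x = 0) ∧ energyLine u u' < M := by
  have hk : 0 ≤ ∫ x, φ' x ^ 2 := integral_nonneg fun x => by positivity
  generalize hm_def : ∫ x, φ x ^ 2 = m at hm hratio ⊢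
  generalize hk_def : ∫ x, φ' x ^ 2 = k at hk hratio ⊢
  generalize hp_def : ∫ x, φ x ^ 6 = p at hratio ⊢
  set e := μ * k / (2 * m) - μ ^ 3 * p / (6 * m ^ 3)
  have he : e < 0 := by
    have hμ0 : 0 < μ := hμ.lt_of_ne (by rintro rfl; nlinarith)
    rw [sub_neg, div_lt_div_iff₀ (by positivity) (by positivity)]
    nlinarith [mul_lt_mul_of_pos_left hratio (show 0 < 2 * m * μ by positivity)]
  obtain ⟨l, hl, hle⟩ : ∃ l, max (2 * d) 1 ≤ l ∧ l ^ 2 * e < M :=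
    ((eventually_ge_atTop _).and
      (((tendsto_pow_atTop two_ne_zero).atTop_mul_const_of_neg he).eventually
        (eventually_lt_atBot M))).exists
  have hl0 : 0 < l := one_pos.trans_le (le_of_max_le_right hl)
  set c := √(l * μ / m)
  have hc : c ^ 2 = l * μ / m := sq_sqrt (by positivity)
  refine ⟨_, _, hφ.rescale c hl0.ne' d, ?_, fun x hx => ?_, ?_⟩
  · rw [integral_const_mul_comp_mul_sub_pow φ c hl0, hm_def, hc]
    field_simp
  · rw [hsupp, mul_zero]
    simp only [mem_Icc, not_and_or, not_le] at hx ⊢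
    have := le_of_max_le_left hl
    rcases hx with hx | hx
    · left; nlinarith
    · right; nlinarith
  · rw [energyLine, integral_const_mul_comp_mul_sub_pow φ' (c * l) hl0,
      integral_const_mul_comp_mul_sub_pow φ c hl0, hk_def, hp_def, mul_pow,
      show c ^ 6 = (c ^ 2) ^ 3 by ring, hc]
    convert hle using 1
    simp only [e]
    field_simp

theorem Function.Even.hasDerivAt_neg {f : ℝ → ℝ} (hf : Function.Even f) {f' x : ℝ}
    (h : HasDerivAt f f' x) : HasDerivAt f (-f') (-x) := by
  have hcomp := (neg_neg x ▸ h).comp (-x) (_root_.hasDerivAt_neg (-x))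
  rwa [show f ∘ Neg.neg = f from funext hf, mul_neg_one] at hcomp

theorem Function.Even.deriv_neg {f : ℝ → ℝ} (hf : Function.Even f) (x : ℝ) :
    deriv f (-x) = -deriv f x := by
  have h := deriv_comp_neg (f := f) (x := -x)
  rwa [show (fun y => f (-y)) = f from funext hf, neg_neg] at h

theorem Function.Even.integral_eq_add_two_mul_intervalIntegral {g : ℝ → ℝ}
    (hg : Function.Even g) {a b : ℝ} (ha : 0 ≤ a) (hab : a ≤ b)
    (hint : IntervalIntegrable g volume (-b) b) (h0 : ∀ x, b < |x| → g x = 0) :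
    ∫ x, g x = (∫ x in -a..a, g x) + 2 * ∫ x in a..b, g x := by
  have hsub : ∀ {c d}, -b ≤ c → c ≤ d → d ≤ b → IntervalIntegrable g volume c d :=
    fun hc hcd hd => hint.mono_set (by
      rw [uIcc_of_le hcd, uIcc_of_le (by linarith)]; exact Icc_subset_Icc hc hd)
  have hneg : ∫ x in -b..-a, g x = ∫ x in a..b, g x := by
    rw [← intervalIntegral.integral_comp_neg]; simp only [hg _]
  rw [← setIntegral_eq_integral_of_forall_compl_eq_zero (s := Icc (-b) b)
      (fun x hx => h0 x (not_le.1 fun h => hx (abs_le.1 h))),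
    integral_Icc_eq_integral_Ioc, ← intervalIntegral.integral_of_le (by linarith),
    ← intervalIntegral.integral_add_adjacent_intervals (b := -a)
      (hsub le_rfl (by linarith) (by linarith)) (hsub (by linarith) (by linarith) le_rfl),
    ← intervalIntegral.integral_add_adjacent_intervals (a := -a) (b := a)
      (hsub (by linarith) (by linarith) (by linarith)) (hsub (by linarith) hab le_rfl), hneg]
  ring

theorem integral_mul_add_one_sub_pow (a b : ℝ) (n : ℕ) :
    ∫ x in b..b + 1, (a * (b + 1 - x)) ^ n = a ^ n / (n + 1) := by
  simp_rw [mul_pow]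
  rw [intervalIntegral.integral_const_mul,
    intervalIntegral.integral_comp_sub_left (fun x => x ^ n), integral_pow]
  simp
  ring

namespace Real

theorem tendsto_sinh_atTop : Tendsto sinh atTop atTop :=
  tendsto_atTop_mono' _ ((eventually_ge_atTop 0).mono fun _ hx => self_le_sinh_iff.2 hx)
    tendsto_id

theorem tendsto_inv_cosh_atTop : Tendsto (fun R => (cosh R)⁻¹) atTop (𝓝 0) :=
  tendsto_inv_atTop_zero.comp
    (tendsto_atTop_mono (fun x => (sinh_lt_cosh x).le) tendsto_sinh_atTop)

theorem tendsto_arctan_sinh_atTop : Tendsto (fun R => arctan (sinh R)) atTop (𝓝 (π / 2)) :=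
  (tendsto_arctan_atTop.mono_right nhdsWithin_le_nhds).comp tendsto_sinh_atTop

theorem tendsto_sinh_div_cosh_sq_atTop :
    Tendsto (fun R => sinh R / cosh R ^ 2) atTop (𝓝 0) := by
  refine squeeze_zero' ((eventually_ge_atTop 0).mono fun x hx => ?_)
    (Eventually.of_forall fun x => ?_) tendsto_inv_cosh_atTop
  · have := sinh_nonneg_iff.2 hx
    positivity
  · rw [div_le_iff₀ (by positivity), inv_mul_eq_div, le_div_iff₀ (cosh_pos x)]
    nlinarith [sinh_lt_cosh x, cosh_pos x]

theorem sq_sqrt_inv_cosh (x : ℝ) : √(cosh x)⁻¹ ^ 2 = (cosh x)⁻¹ := sq_sqrt (by positivity)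

theorem hasDerivAt_sqrt_inv_cosh (x : ℝ) :
    HasDerivAt (fun y => √(cosh y)⁻¹) (-sinh x / (2 * cosh x * √(cosh x))) x := by
  have hc : 0 < cosh x := cosh_pos x
  have hinv : HasDerivAt (fun y => (cosh y)⁻¹) (-sinh x / cosh x ^ 2) x :=
    (hasDerivAt_cosh x).inv hc.ne'
  convert hinv.sqrt (inv_pos.2 hc).ne' using 1
  rw [sqrt_inv]
  field_simp
  linear_combination sinh x * sq_sqrt hc.le

theorem hasDerivAt_arctan_sinh (x : ℝ) :
    HasDerivAt (fun y => arctan (sinh y)) (cosh x)⁻¹ x := by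
  refine ((hasDerivAt_arctan (sinh x)).comp x (hasDerivAt_sinh x)).congr_deriv ?_
  rw [← cosh_sq']
  field_simp

theorem hasDerivAt_sinh_div_cosh_sq (x : ℝ) :
    HasDerivAt (fun y => sinh y / cosh y ^ 2) (2 * (cosh x)⁻¹ ^ 3 - (cosh x)⁻¹) x := by
  have hc := cosh_pos x
  refine ((hasDerivAt_sinh x).div ((hasDerivAt_cosh x).fun_pow 2)
    (pow_pos hc 2).ne').congr_deriv ?_
  field_simp
  norm_num
  linear_combination 2 * cosh x * cosh_sq x

theorem integral_inv_cosh (R : ℝ) : ∫ x in -R..R, (cosh x)⁻¹ = 2 * arctan (sinh R) := by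
  rw [intervalIntegral.integral_eq_sub_of_hasDerivAt (fun x _ => hasDerivAt_arctan_sinh x)
    ((continuous_cosh.inv₀ fun x => (cosh_pos x).ne').intervalIntegrable _ _), sinh_neg,
    arctan_neg]
  ring

theorem integral_inv_cosh_pow_three (R : ℝ) :
    ∫ x in -R..R, (cosh x)⁻¹ ^ 3 = arctan (sinh R) + sinh R / cosh R ^ 2 := by
  have hderiv : ∀ x, HasDerivAt (fun y => (arctan (sinh y) + sinh y / cosh y ^ 2) / 2)
      ((cosh x)⁻¹ ^ 3) x := fun x => by
    refine (((hasDerivAt_arctan_sinh x).add (hasDerivAt_sinh_div_cosh_sq x)).div_const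
      2).congr_deriv ?_
    ring
  rw [intervalIntegral.integral_eq_sub_of_hasDerivAt (fun x _ => hderiv x)
    (((continuous_cosh.inv₀ fun x => (cosh_pos x).ne').pow 3).intervalIntegrable _ _), sinh_neg,
    arctan_neg, cosh_neg]
  ring

end Real

section TruncatedSoliton

/-- `√sech` on `[-R, R]`, continued by linear ramps down to `0` on `R ≤ |x| ≤ R + 1`. -/
def truncSoliton (R x : ℝ) : ℝ := √(cosh (min |x| R))⁻¹ * max 0 (min 1 (R + 1 - |x|))

variable {R x : ℝ}

theorem truncSoliton_even : Function.Even (truncSoliton R) := fun x => by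
  simp only [truncSoliton, abs_neg]

theorem continuous_truncSoliton : Continuous (truncSoliton R) :=
  ((continuous_cosh.comp (continuous_abs.min continuous_const)).inv₀
    fun _ => (cosh_pos _).ne').sqrt.mul
    (continuous_const.max (continuous_const.min (continuous_const.sub continuous_abs)))

theorem truncSoliton_of_abs_le (h : |x| ≤ R) : truncSoliton R x = √(cosh x)⁻¹ := by
  rw [truncSoliton, min_eq_left h, cosh_abs, min_eq_left (by linarith),
    max_eq_right zero_le_one, mul_one]

theorem truncSoliton_of_mem_Icc (hR : 0 ≤ R) (h : x ∈ Icc R (R + 1)) :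
    truncSoliton R x = √(cosh R)⁻¹ * (R + 1 - x) := by
  rw [truncSoliton, abs_of_nonneg (hR.trans h.1), min_eq_right h.1,
    min_eq_right (by linarith [h.1]), max_eq_right (by linarith [h.2])]

theorem truncSoliton_of_le_abs (h : R + 1 ≤ |x|) : truncSoliton R x = 0 := by
  rw [truncSoliton, max_eq_left (min_le_of_right_le (by linarith)), mul_zero]

theorem hasDerivAt_truncSoliton_of_abs_lt (h : |x| < R) :
    HasDerivAt (truncSoliton R) (-sinh x / (2 * cosh x * √(cosh x))) x :=
  (hasDerivAt_sqrt_inv_cosh x).congr_of_eventuallyEq <| by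
    filter_upwards [(isOpen_lt continuous_abs continuous_const).mem_nhds h] with y hy
    exact truncSoliton_of_abs_le hy.le

theorem hasDerivAt_truncSoliton_of_mem_Ioo (hR : 0 ≤ R) (h : x ∈ Ioo R (R + 1)) :
    HasDerivAt (truncSoliton R) (-√(cosh R)⁻¹) x := by
  have hramp : HasDerivAt (fun y => √(cosh R)⁻¹ * (R + 1 - y)) (-√(cosh R)⁻¹) x := by
    simpa using ((hasDerivAt_id x).const_sub (R + 1)).const_mul (√(cosh R)⁻¹)
  refine hramp.congr_of_eventuallyEq ?_
  filter_upwards [Ioo_mem_nhds h.1 h.2] with y hy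
  exact truncSoliton_of_mem_Icc hR (Ioo_subset_Icc_self hy)

theorem hasDerivAt_truncSoliton_of_lt_abs (h : R + 1 < |x|) :
    HasDerivAt (truncSoliton R) 0 x :=
  (hasDerivAt_const x 0).congr_of_eventuallyEq <| by
    filter_upwards [(isOpen_lt continuous_const continuous_abs).mem_nhds h] with y hy
    exact truncSoliton_of_le_abs hy.le

theorem exists_hasDerivAt_truncSoliton (hR : 0 ≤ R) (hx : |x| ≠ R) (hx' : |x| ≠ R + 1) :
    ∃ d, |d| ≤ 1 ∧ HasDerivAt (truncSoliton R) d x := by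
  have hramp : |√(cosh R)⁻¹| ≤ 1 := by
    rw [abs_of_nonneg (sqrt_nonneg _), sqrt_le_one, inv_le_one₀ (cosh_pos R)]
    exact one_le_cosh R
  rcases hx.lt_or_gt with hcore | hout
  · refine ⟨_, ?_, hasDerivAt_truncSoliton_of_abs_lt hcore⟩
    have hc : 1 ≤ cosh x := one_le_cosh x
    have hsinh : |sinh x| ≤ cosh x := by
      rw [abs_sinh, ← cosh_abs]; exact (sinh_lt_cosh _).le
    have hden : 0 < 2 * cosh x * √(cosh x) := by positivity
    rw [abs_div, abs_neg, abs_of_pos hden, div_le_one hden]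
    nlinarith [one_le_sqrt.2 hc]
  rcases hx'.lt_or_gt with htail | hzero
  · rcases le_or_gt 0 x with hx0 | hx0
    · rw [abs_of_nonneg hx0] at hout htail
      exact ⟨_, by rwa [abs_neg], hasDerivAt_truncSoliton_of_mem_Ioo hR ⟨hout, htail⟩⟩
    · rw [abs_of_neg hx0] at hout htail
      refine ⟨_, by rwa [abs_neg, abs_neg], ?_⟩
      simpa using truncSoliton_even.hasDerivAt_neg
        (hasDerivAt_truncSoliton_of_mem_Ioo hR ⟨hout, htail⟩)
  · exact ⟨0, by simp, hasDerivAt_truncSoliton_of_lt_abs hzero⟩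

theorem isH1Line_truncSoliton (hR : 0 ≤ R) :
    IsH1Line (truncSoliton R) (deriv (truncSoliton R)) := by
  set S : Set ℝ := {R, -R, R + 1, -(R + 1)}
  have hS : ∀ x ∉ S, ∃ d, |d| ≤ 1 ∧ HasDerivAt (truncSoliton R) d x := fun x hx =>
    exists_hasDerivAt_truncSoliton hR
      (fun h => hx (by rcases (abs_eq hR).1 h with h | h <;> simp [S, h]))
      (fun h => hx (by rcases (abs_eq (by linarith)).1 h with h | h <;> simp [S, h]))
  have hbound : ∀ᵐ x, ‖deriv (truncSoliton R) x‖ ≤ 1 := by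
    filter_upwards [(Set.toFinite S).countable.ae_notMem volume] with x hx
    obtain ⟨d, hd, hderiv⟩ := hS x hx
    rwa [hderiv.deriv, Real.norm_eq_abs]
  have hderiv : MemLp (deriv (truncSoliton R)) 2 :=
    (memLp_top_of_bound (measurable_deriv _).aestronglyMeasurable 1
      hbound).mono_exponent_of_measure_support_ne_top (s := Icc (-(R + 1)) (R + 1))
      (fun x hx => (hasDerivAt_truncSoliton_of_lt_abs (not_le.1 fun h => hx (abs_le.1 h))).deriv)
      measure_Icc_lt_top.ne le_top
  refine ⟨fun x => ?_, continuous_truncSoliton.memLp_of_hasCompactSupport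
    (HasCompactSupport.intro isCompact_Icc fun x hx =>
      truncSoliton_of_le_abs (not_le.1 fun h => hx (abs_le.1 h)).le), hderiv⟩
  rw [integral_eq_of_hasDerivAt_off_countable _ _ (Set.toFinite S).countable
    continuous_truncSoliton.continuousOn
    (fun y hy => by obtain ⟨d, -, hd⟩ := hS y hy.2; exact hd.differentiableAt.hasDerivAt)
    (hderiv.intervalIntegrable one_le_two 0 x)]
  ring

theorem integral_truncSoliton_pow (hR : 0 ≤ R) {n : ℕ} (hn : n ≠ 0) :
    ∫ x, truncSoliton R x ^ n =
      (∫ x in -R..R, √(cosh x)⁻¹ ^ n) + 2 * (√(cosh R)⁻¹ ^ n / (n + 1)) := by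
  rw [Function.Even.integral_eq_add_two_mul_intervalIntegral
      (g := fun x => truncSoliton R x ^ n) (b := R + 1)
      (fun x => by simp only [truncSoliton_even x]) hR (by linarith)
      ((continuous_truncSoliton.pow n).intervalIntegrable _ _)
      (fun x hx => by rw [truncSoliton_of_le_abs hx.le, zero_pow hn]),
    intervalIntegral.integral_congr (a := -R) (b := R) (g := fun x => √(cosh x)⁻¹ ^ n)
      fun x hx => by
        rw [uIcc_of_le (by linarith)] at hx
        simp only [truncSoliton_of_abs_le (abs_le.2 hx)],
    intervalIntegral.integral_congr (a := R) (b := R + 1)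
      (g := fun x => (√(cosh R)⁻¹ * (R + 1 - x)) ^ n) fun x hx => by
        rw [uIcc_of_le (by linarith)] at hx
        simp only [truncSoliton_of_mem_Icc hR hx],
    integral_mul_add_one_sub_pow]

theorem integral_truncSoliton_sq (hR : 0 ≤ R) :
    ∫ x, truncSoliton R x ^ 2 = 2 * arctan (sinh R) + 2 / 3 * (cosh R)⁻¹ := by
  simp_rw [integral_truncSoliton_pow hR two_ne_zero, sq_sqrt_inv_cosh, integral_inv_cosh]
  ring

theorem integral_truncSoliton_pow_six (hR : 0 ≤ R) :
    ∫ x, truncSoliton R x ^ 6 =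
      arctan (sinh R) + sinh R / cosh R ^ 2 + 2 / 7 * (cosh R)⁻¹ ^ 3 := by
  have hsix : ∀ x, √(cosh x)⁻¹ ^ 6 = (cosh x)⁻¹ ^ 3 := fun x => by
    rw [show 6 = 2 * 3 from rfl, pow_mul, sq_sqrt_inv_cosh]
  simp_rw [integral_truncSoliton_pow hR (by norm_num : 6 ≠ 0), hsix, integral_inv_cosh_pow_three]
  ring

theorem integral_deriv_truncSoliton_sq (hR : 0 ≤ R) :
    ∫ x, deriv (truncSoliton R) x ^ 2 =
      (arctan (sinh R) - sinh R / cosh R ^ 2) / 4 + 2 * (cosh R)⁻¹ := by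
  have hcont : Continuous fun x => (cosh x)⁻¹ := continuous_cosh.inv₀ fun x => (cosh_pos x).ne'
  have hcont3 : Continuous fun x => (cosh x)⁻¹ ^ 3 := hcont.pow 3
  rw [Function.Even.integral_eq_add_two_mul_intervalIntegral
      (g := fun x => deriv (truncSoliton R) x ^ 2) (b := R + 1)
      (fun x => by simp only [truncSoliton_even.deriv_neg, neg_sq]) hR
      (by linarith) ((isH1Line_truncSoliton hR).2.2.integrable_sq.intervalIntegrable)
      (fun x hx => by rw [(hasDerivAt_truncSoliton_of_lt_abs hx).deriv, sq, mul_zero]),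
    intervalIntegral.integral_congr_Ioo_of_le (a := -R) (b := R)
      (g := fun x => ((cosh x)⁻¹ - (cosh x)⁻¹ ^ 3) / 4) (by linarith) fun x hx => by
        have hc := cosh_pos x
        simp only [(hasDerivAt_truncSoliton_of_abs_lt (abs_lt.2 hx)).deriv]
        field_simp
        rw [sq_sqrt hc.le]
        linear_combination -4 * cosh x * cosh_sq x,
    intervalIntegral.integral_congr_Ioo_of_le (a := R) (b := R + 1) (g := fun _ => (cosh R)⁻¹)
      (by linarith) fun x hx => by
        simp only [(hasDerivAt_truncSoliton_of_mem_Ioo hR hx).deriv, neg_sq, sq_sqrt_inv_cosh],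
    intervalIntegral.integral_div, intervalIntegral.integral_sub (hcont.intervalIntegrable _ _)
      (hcont3.intervalIntegrable _ _), integral_inv_cosh, integral_inv_cosh_pow_three,
    intervalIntegral.integral_const]
  simp
  ring

theorem exists_truncSoliton_of_critical_mass_lt {μ : ℝ} (hμ : π * √3 / 2 < μ) :
    ∃ R, 0 ≤ R ∧ 0 < ∫ x, truncSoliton R x ^ 2 ∧
      3 * (∫ x, deriv (truncSoliton R) x ^ 2) * (∫ x, truncSoliton R x ^ 2) ^ 2 <
        μ ^ 2 * ∫ x, truncSoliton R x ^ 6 := by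
  have hmass : Tendsto (fun R => ∫ x, truncSoliton R x ^ 2) atTop (𝓝 π) := by
    refine Tendsto.congr' ((eventually_ge_atTop 0).mono fun R hR =>
      (integral_truncSoliton_sq hR).symm) ?_
    convert (tendsto_arctan_sinh_atTop.const_mul 2).add
      (tendsto_inv_cosh_atTop.const_mul (2 / 3)) using 2
    ring
  have hkin : Tendsto (fun R => ∫ x, deriv (truncSoliton R) x ^ 2) atTop (𝓝 (π / 8)) := by
    refine Tendsto.congr' ((eventually_ge_atTop 0).mono fun R hR =>
      (integral_deriv_truncSoliton_sq hR).symm) ?_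
    convert ((tendsto_arctan_sinh_atTop.sub tendsto_sinh_div_cosh_sq_atTop).div_const 4).add
      (tendsto_inv_cosh_atTop.const_mul 2) using 2
    ring
  have hpot : Tendsto (fun R => ∫ x, truncSoliton R x ^ 6) atTop (𝓝 (π / 2)) := by
    refine Tendsto.congr' ((eventually_ge_atTop 0).mono fun R hR =>
      (integral_truncSoliton_pow_six hR).symm) ?_
    simpa using (tendsto_arctan_sinh_atTop.add tendsto_sinh_div_cosh_sq_atTop).add
      ((tendsto_inv_cosh_atTop.pow 3).const_mul (2 / 7))
  have hgap : 3 * (π / 8) * π ^ 2 < μ ^ 2 * (π / 2) := by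
    have h3 : √3 ^ 2 = 3 := sq_sqrt (by norm_num)
    have := pow_lt_pow_left₀ hμ (by positivity) two_ne_zero
    rw [div_pow, mul_pow, h3] at this
    nlinarith [pi_pos]
  exact ((eventually_ge_atTop 0).and ((hmass.eventually (eventually_gt_nhds pi_pos)).and
    (((hkin.const_mul 3).mul (hmass.pow 2)).eventually_lt (hpot.const_mul _) hgap))).exists

end TruncatedSoliton

/-- For every mass `μ > μ_ℝ = π√3/2`, the `L²`-critical NLS energy is unbounded
below among `H¹(ℝ)` functions of mass `μ` supported in `[0,1]`:
the infimum over this class is `-∞`. -/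
theorem energy_unbounded_below_supported (μ : ℝ) (hμ : π * Real.sqrt 3 / 2 < μ) :
    ∀ M : ℝ, ∃ u u' : ℝ → ℝ, IsH1Line u u' ∧ (∫ x : ℝ, u x ^ 2) = μ ∧
      (∀ x : ℝ, x ∉ Icc (0:ℝ) 1 → u x = 0) ∧ energyLine u u' < M := by
  obtain ⟨R, hR, hmass, hratio⟩ := exists_truncSoliton_of_critical_mass_lt hμ
  exact exists_supported_energyLine_lt (isH1Line_truncSoliton hR)
    (fun x hx => truncSoliton_of_le_abs (not_le.1 fun h => hx (abs_le.1 h)).le) hmass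
    (le_trans (by positivity) hμ.le) hratio
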